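/- Under the stated setup, let H : [0,T] → ℝ^{N×N} be a continuously differentiable symmetric-matrix-valued function with H(0) = 0 satisfying, for all τ ∈ [0,T], H'(τ) + H(τ) CᵀΣC H(τ) − (1/γ)( η(T−τ)ᵀC H(τ) + H(τ)Cᵀη(T−τ) ) − ((γ−1)/γ²) η(T−τ)ᵀΣ^{−1}η(T−τ) = 0. Let g : [0,T] → ℝ^N be continuously differentiable with g(0) = 0 and g'(τ) = [ (1/γ) η(T−τ)ᵀ − H(τ)CᵀΣ ] C g(τ) − H(τ)( m + (1/γ−1)Cᵀμ ) + ((1−γ)/γ²) η(T−τ)ᵀΣ^{−1}μ. Define f(τ) := ((1−γ)/γ)( r + μᵀΣ^{−1}μ/(2γ) )τ + ∫_0^τ [ (1/2) g(u)ᵀCᵀΣC g(u) − (1/2) tr( CᵀΣC H(u) ) + ( m + (1/γ−1)Cᵀμ )ᵀ g(u) ] du, and define v(t,x,z) := (x^{1−γ}/(1−γ)) exp( γ( f(T−t) + zᵀg(T−t) − (1/2) zᵀH(T−t)z ) ) for (t,x,z) ∈ [0,T]×(0,∞)×ℝ^N. Then v(T,x,z) = x^{1−γ}/(1−γ), and at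 every (t,x,z) ∈ [0,T]×(0,∞)×ℝ^N the partial derivatives of v satisfy v_t + (m + Cᵀη(t)z)ᵀ v_z + (1/2) tr( CᵀΣC v_zz ) + r x v_x − (1/2)(μ + η(t)z)ᵀΣ^{−1}(μ + η(t)z) v_x²/v_xx − (1/(2 v_xx)) v_xzᵀ CᵀΣC v_xz − (v_x/v_xx) (μ + η(t)z)ᵀ C v_xz = 0, where v_z denotes the gradient of v in z, v_zz the Hessian in z, v_x and v_xx the first and second partial derivatives in x, and v_xz the gradient in z of v_x. -/

import Mathlib

open Matrix Set

attribute [local instance] Matrix.normedAddCommGroup Matrix.normedSpace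

/-!
Write `v = x^(1-γ)/(1-γ) · exp(γ φ)` with `φ(τ, z) = f τ + z ⬝ g τ - ½ z ⬝ H τ z`, evaluated at
`τ = T - t`. Each partial derivative of `v` is `v`, or `x^(-γ) exp(γ φ)`, times an explicit factor
built from `φ_τ`, the gradient `p = g - H z` and the Hessian `-H` of `φ` in `z`. Dividing the HJB
operator by `γ v` therefore leaves a scalar expression which is quadratic in `z`; its constant,
linear and quadratic parts vanish by the definition of `f`, the linear equation for `g` and the
Riccati equation for `H`. The terminal condition is `f 0 = 0`, `g 0 = 0`, `H 0 = 0`.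
-/

section DotProductCalculus

variable {n ι : Type*} [Fintype n] [Fintype ι] {u v : ℝ → n → ℝ} {u' v' : n → ℝ} {s : Set ℝ}
  {x : ℝ}

theorem HasDerivWithinAt.dotProduct (hu : HasDerivWithinAt u u' s x)
    (hv : HasDerivWithinAt v v' s x) :
    HasDerivWithinAt (fun t => u t ⬝ᵥ v t) (u' ⬝ᵥ v x + u x ⬝ᵥ v') s x := by
  have := HasDerivWithinAt.fun_sum (u := Finset.univ)
    fun j _ => (hasDerivWithinAt_pi.1 hu j).fun_mul (hasDerivWithinAt_pi.1 hv j)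
  rwa [Finset.sum_add_distrib] at this

omit [Fintype ι] in
theorem HasDerivWithinAt.matrix_mulVec {A : ℝ → Matrix ι n ℝ} {A' : Matrix ι n ℝ}
    (hA : HasDerivWithinAt A A' s x) (hu : HasDerivWithinAt u u' s x) :
    HasDerivWithinAt (fun t => A t *ᵥ u t) (A' *ᵥ u x + A x *ᵥ u') s x :=
  hasDerivWithinAt_pi.2 fun i => (hasDerivWithinAt_pi.1 hA i).dotProduct hu

theorem HasDerivAt.dotProduct (hu : HasDerivAt u u' x) (hv : HasDerivAt v v' x) :
    HasDerivAt (fun t => u t ⬝ᵥ v t) (u' ⬝ᵥ v x + u x ⬝ᵥ v') x :=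
  hasDerivWithinAt_univ.mp (hu.hasDerivWithinAt.dotProduct hv.hasDerivWithinAt)

theorem HasDerivAt.matrix_mulVec {A : ℝ → Matrix ι n ℝ} {A' : Matrix ι n ℝ}
    (hA : HasDerivAt A A' x) (hu : HasDerivAt u u' x) :
    HasDerivAt (fun t => A t *ᵥ u t) (A' *ᵥ u x + A x *ᵥ u') x :=
  hasDerivWithinAt_univ.mp (hA.hasDerivWithinAt.matrix_mulVec hu.hasDerivWithinAt)

end DotProductCalculus

theorem hasDerivWithinAt_integral_Icc {E : Type*} [NormedAddCommGroup E] [NormedSpace ℝ E]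
    [CompleteSpace E] {ψ : ℝ → E} {a b τ : ℝ} (hψ : ContinuousOn ψ (Icc a b))
    (hτ : τ ∈ Icc a b) : HasDerivWithinAt (fun s => ∫ u in a..s, ψ u) (ψ τ) (Icc a b) τ := by
  -- the `FTCFilter` instance for `Icc` is found through `Fact (τ ∈ Icc a b)`
  have := Fact.mk hτ
  exact intervalIntegral.integral_hasDerivWithinAt_right
    ((hψ.mono (Icc_subset_Icc le_rfl hτ.2)).intervalIntegrable_of_Icc hτ.1)
    (hψ.stronglyMeasurableAtFilter_nhdsWithin measurableSet_Icc τ) (hψ.continuousWithinAt hτ)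

theorem hasDerivWithinAt_mul_add_integral {f ψ : ℝ → ℝ} {c a b τ : ℝ}
    (hf : ∀ s, f s = c * s + ∫ u in a..s, ψ u) (hψ : ContinuousOn ψ (Icc a b))
    (hτ : τ ∈ Icc a b) : HasDerivWithinAt f (c + ψ τ) (Icc a b) τ := by
  rw [funext hf]
  simpa using ((hasDerivWithinAt_id τ _).const_mul c).fun_add (hasDerivWithinAt_integral_Icc hψ hτ)

theorem eq_of_hasDerivAt_rpow_one_sub_div_mul {γ E x V' : ℝ} {V : ℝ → ℝ} (hγ : γ ≠ 1)
    (hx : x ≠ 0) (hV : ∀ y, V y = y ^ (1 - γ) / (1 - γ) * E) (hV' : HasDerivAt V V' x) :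
    V' = x ^ (-γ) * E := by
  refine hV'.unique ?_
  rw [funext hV]
  have := ((Real.hasDerivAt_rpow_const (p := 1 - γ) (Or.inl hx)).div_const (1 - γ)).mul_const E
  rwa [sub_sub_cancel_left, mul_div_cancel_left₀ _ (sub_ne_zero.2 hγ.symm)] at this

theorem eq_of_hasDerivAt_rpow_mul {p E x V' : ℝ} {V : ℝ → ℝ} (hx : 0 < x)
    (hV : ∀ y ∈ Ioi (0:ℝ), V y = y ^ p * E) (hV' : HasDerivAt V V' x) :
    V' = p * x ^ (p - 1) * E :=
  hV'.unique <| ((Real.hasDerivAt_rpow_const (Or.inl hx.ne')).mul_const E).congr_of_eventuallyEq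
    (Filter.eventually_of_mem (Ioi_mem_nhds hx) hV)

section MatrixAlgebra

variable {l m n R : Type*} [Fintype l] [Fintype m] [Fintype n] [CommSemiring R]

theorem Matrix.dotProduct_mulVec_eq_transpose_mulVec (M : Matrix m n R) (u : m → R)
    (v : n → R) : u ⬝ᵥ (M *ᵥ v) = (Mᵀ *ᵥ u) ⬝ᵥ v := by
  rw [dotProduct_mulVec, mulVec_transpose]

theorem Matrix.dotProduct_mul_mulVec (A : Matrix l m R) (B : Matrix m n R) (u : l → R)
    (v : n → R) : u ⬝ᵥ ((A * B) *ᵥ v) = (Aᵀ *ᵥ u) ⬝ᵥ (B *ᵥ v) := by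
  rw [← mulVec_mulVec, dotProduct_mulVec_eq_transpose_mulVec]

theorem Matrix.IsSymm.dotProduct_mulVec_comm {M : Matrix n n R} (hM : M.IsSymm) (u v : n → R) :
    u ⬝ᵥ (M *ᵥ v) = v ⬝ᵥ (M *ᵥ u) := by
  rw [dotProduct_mulVec_eq_transpose_mulVec, hM.eq, dotProduct_comm]

omit [Fintype n] in
theorem Matrix.IsSymm.transpose_mul_mul {A : Matrix m m R} (hA : A.IsSymm) (B : Matrix m n R) :
    (Bᵀ * A * B).IsSymm := by
  simp only [IsSymm, transpose_mul, transpose_transpose, hA.eq, Matrix.mul_assoc]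

end MatrixAlgebra

section QuadExponent

variable {n : Type*} [Fintype n]

noncomputable def quadExponent (a : ℝ) (b : n → ℝ) (Q : Matrix n n ℝ) (z : n → ℝ) : ℝ :=
  a + z ⬝ᵥ b - 1/2 * (z ⬝ᵥ (Q *ᵥ z))

theorem hasDerivWithinAt_quadExponent {a : ℝ → ℝ} {b : ℝ → n → ℝ} {Q : ℝ → Matrix n n ℝ}
    {a' : ℝ} {b' : n → ℝ} {Q' : Matrix n n ℝ} {s : Set ℝ} {τ : ℝ} (z : n → ℝ)
    (ha : HasDerivWithinAt a a' s τ) (hb : HasDerivWithinAt b b' s τ)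
    (hQ : HasDerivWithinAt Q Q' s τ) :
    HasDerivWithinAt (fun τ => quadExponent (a τ) (b τ) (Q τ) z) (quadExponent a' b' Q' z) s τ := by
  have hz := hasDerivWithinAt_const τ s z
  refine ((ha.fun_add (hz.dotProduct hb)).fun_sub
    ((hz.dotProduct (hQ.matrix_mulVec hz)).const_mul (1/2))).congr_deriv ?_
  simp [quadExponent]

theorem eq_of_hasDerivWithinAt_mul_exp_quadExponent_reflect {γ c T t : ℝ} {z : n → ℝ}
    {a : ℝ → ℝ} {b : ℝ → n → ℝ} {Q : ℝ → Matrix n n ℝ} {a' : ℝ} {b' : n → ℝ}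
    {Q' : Matrix n n ℝ} {V : ℝ → ℝ} {V' : ℝ} (hT : 0 < T) (ht : t ∈ Icc 0 T)
    (hV : ∀ s, V s = c * Real.exp (γ * quadExponent (a (T - s)) (b (T - s)) (Q (T - s)) z))
    (hV' : HasDerivWithinAt V V' (Icc 0 T) t) (ha : HasDerivWithinAt a a' (Icc 0 T) (T - t))
    (hb : HasDerivWithinAt b b' (Icc 0 T) (T - t)) (hQ : HasDerivWithinAt Q Q' (Icc 0 T) (T - t)) :
    V' = -(γ * (c * Real.exp (γ * quadExponent (a (T - t)) (b (T - t)) (Q (T - t)) z))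
      * quadExponent a' b' Q' z) := by
  have hreflect : MapsTo (T - ·) (Icc 0 T) (Icc 0 T) :=
    fun s hs => ⟨sub_nonneg.2 hs.2, sub_le_self _ hs.1⟩
  have hφ := (hasDerivWithinAt_quadExponent z ha hb hQ).comp t
    ((hasDerivWithinAt_id t _).const_sub T) hreflect
  refine (uniqueDiffOn_Icc hT t ht).eq_deriv _ hV' ?_
  rw [funext hV]
  exact ((hφ.const_mul γ).exp.const_mul c).congr_deriv (by simp only [Function.comp_apply]; ring)

variable [DecidableEq n] {Q : Matrix n n ℝ}

theorem hasDerivAt_quadExponent_update (hQ : Q.IsSymm) (a : ℝ) (b z : n → ℝ) (i : n) :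
    HasDerivAt (fun s => quadExponent a b Q (Function.update z i s)) ((b - Q *ᵥ z) i) (z i) := by
  have hu := hasDerivAt_update z i (z i)
  refine (((hu.dotProduct (hasDerivAt_const _ b)).const_add a).fun_sub
    ((hu.dotProduct ((hasDerivAt_const _ Q).matrix_mulVec hu)).const_mul (1/2))).congr_deriv ?_
  simp only [Function.update_eq_self, dotProduct_zero, add_zero, zero_mulVec, zero_add,
    single_one_dotProduct, mulVec_single_one, Pi.sub_apply]
  have hcol : Q.col i ⬝ᵥ z = (Q *ᵥ z) i := by
    conv_rhs => rw [← hQ.eq]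
    rfl
  rw [dotProduct_comm, hcol]
  ring

theorem hasDerivAt_mul_exp_quadExponent_update (hQ : Q.IsSymm) (c γ a : ℝ) (b z : n → ℝ)
    (i : n) :
    HasDerivAt (fun s => c * Real.exp (γ * quadExponent a b Q (Function.update z i s)))
      (γ * (c * Real.exp (γ * quadExponent a b Q z)) * (b - Q *ᵥ z) i) (z i) := by
  have := ((hasDerivAt_quadExponent_update hQ a b z i).const_mul γ).exp.const_mul c
  rw [Function.update_eq_self] at this
  exact this.congr_deriv (by ring)

variable {c γ a : ℝ} {b z : n → ℝ}

theorem eq_of_hasDerivAt_mul_exp_quadExponent_update {V : (n → ℝ) → ℝ} {V' : n → ℝ}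
    (hQ : Q.IsSymm) (hV : ∀ z, V z = c * Real.exp (γ * quadExponent a b Q z))
    (hV' : ∀ i, HasDerivAt (fun s => V (Function.update z i s)) (V' i) (z i)) :
    V' = (γ * (c * Real.exp (γ * quadExponent a b Q z))) • (b - Q *ᵥ z) := by
  funext i
  refine (hV' i).unique ?_
  simpa only [hV, Pi.smul_apply, smul_eq_mul] using
    hasDerivAt_mul_exp_quadExponent_update hQ c γ a b z i

theorem eq_of_hasDerivAt_smul_exp_quadExponent_update {W : (n → ℝ) → n → ℝ}
    {W' : Matrix n n ℝ} (hQ : Q.IsSymm)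
    (hW : ∀ z, W z = (γ * (c * Real.exp (γ * quadExponent a b Q z))) • (b - Q *ᵥ z))
    (hW' : ∀ i j, HasDerivAt (fun s => W (Function.update z j s) i) (W' i j) (z j)) :
    W' = (c * Real.exp (γ * quadExponent a b Q z))
      • (γ ^ 2 • vecMulVec (b - Q *ᵥ z) (b - Q *ᵥ z) - γ • Q) := by
  ext i j
  refine (hW' i j).unique ?_
  have hp : HasDerivAt (fun s => (b - Q *ᵥ Function.update z j s) i) (-Q i j) (z j) :=
    ((hasDerivAt_const (z j) (b i)).fun_sub ((hasDerivAt_const _ (Q i)).dotProduct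
      (hasDerivAt_update z j (z j)))).congr_deriv (by simp)
  simp only [hW, Pi.smul_apply, smul_eq_mul]
  refine (((hasDerivAt_mul_exp_quadExponent_update hQ c γ a b z j).const_mul γ).fun_mul
    hp).congr_deriv ?_
  simp only [Function.update_eq_self, Matrix.smul_apply, Matrix.sub_apply, vecMulVec_apply,
    smul_eq_mul]
  ring

end QuadExponent

section ReducedHJB

variable {n ι : Type*} [Fintype n] [Fintype ι] [DecidableEq ι] (Sig : Matrix ι ι ℝ)
  (C η : Matrix ι n ℝ) (m : n → ℝ) (μ : ι → ℝ)

/-- The HJB operator divided by `γ v` for `v = x^(1-γ)/(1-γ) · exp(γ φ)`, where `D = φ_τ`,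
`p = ∇_z φ` and `-Q` is the Hessian of `φ` in `z`. -/
noncomputable def reducedHJB (γ r : ℝ) (z : n → ℝ) (D : ℝ) (p : n → ℝ) (Q : Matrix n n ℝ) : ℝ :=
  -D + (m + (Cᵀ * η) *ᵥ z) ⬝ᵥ p + 1/2 * (p ⬝ᵥ ((Cᵀ * Sig * C) *ᵥ p))
    - 1/2 * trace (Cᵀ * Sig * C * Q) + (1 - γ)/γ * r
    + (1 - γ)/(2*γ^2) * ((μ + η *ᵥ z) ⬝ᵥ (Sig⁻¹ *ᵥ (μ + η *ᵥ z)))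
    + (1 - γ)/γ * ((μ + η *ᵥ z) ⬝ᵥ (C *ᵥ p))

theorem hjb_eq_mul_reducedHJB {γ r x E D vt vx vxx : ℝ} {z p vz vxz : n → ℝ}
    {Q vzz : Matrix n n ℝ} (hγ0 : γ ≠ 0) (hγ1 : γ ≠ 1) (hx : 0 < x)
    (hvt : vt = -(γ * (x ^ (1 - γ) / (1 - γ) * E) * D)) (hvx : vx = x ^ (-γ) * E)
    (hvxx : vxx = -γ * x ^ (-γ - 1) * E) (hvz : vz = (γ * (x ^ (1 - γ) / (1 - γ) * E)) • p)
    (hvzz : vzz = (x ^ (1 - γ) / (1 - γ) * E) • (γ ^ 2 • vecMulVec p p - γ • Q))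
    (hvxz : vxz = (γ * (x ^ (-γ) * E)) • p) :
    vt + (m + ((Cᵀ * η) *ᵥ z)) ⬝ᵥ vz + (1/2) * trace (Cᵀ * Sig * C * vzz) + r * x * vx
      - (1/2) * ((μ + (η *ᵥ z)) ⬝ᵥ (Sig⁻¹ *ᵥ (μ + (η *ᵥ z)))) * vx ^ 2 / vxx
      - (1/(2 * vxx)) * (vxz ⬝ᵥ ((Cᵀ * Sig * C) *ᵥ vxz))
      - (vx / vxx) * ((μ + (η *ᵥ z)) ⬝ᵥ (C *ᵥ vxz))
      = γ * (x ^ (1 - γ) / (1 - γ) * E) * reducedHJB Sig C η m μ γ r z D p Q := by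
  subst hvt hvx hvxx hvz hvzz hvxz
  have hpow : x ^ (1 - γ) = x * x ^ (-γ) := by
    rw [sub_eq_neg_add, Real.rpow_add_one hx.ne', mul_comm]
  have hx' : x ^ (-γ) ≠ 0 := (Real.rpow_pos_of_pos hx _).ne'
  unfold reducedHJB
  simp only [dotProduct_smul, smul_dotProduct, mulVec_smul, Matrix.mul_smul, Matrix.mul_sub,
    trace_smul, trace_sub, mul_vecMulVec, trace_vecMulVec, smul_eq_mul,
    Real.rpow_sub_one hx.ne', hpow]
  rw [dotProduct_comm ((Cᵀ * Sig * C) *ᵥ p)]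
  field_simp [sub_ne_zero.2 hγ1.symm]
  ring

variable {Sig C η m μ} {γ r : ℝ} {z g g' : n → ℝ} {H H' : Matrix n n ℝ}

theorem dotProduct_of_linear_ode (hH : H.IsSymm)
    (hg' : g' = (((1/γ) • ηᵀ - H * (Cᵀ * Sig)) * C) *ᵥ g - H *ᵥ (m + (1/γ - 1) • (Cᵀ *ᵥ μ))
      + ((1 - γ)/γ^2) • ((ηᵀ * Sig⁻¹) *ᵥ μ)) :
    z ⬝ᵥ g' = 1/γ * ((η *ᵥ z) ⬝ᵥ (C *ᵥ g)) - (H *ᵥ z) ⬝ᵥ ((Cᵀ * Sig * C) *ᵥ g)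
      - (H *ᵥ z) ⬝ᵥ (m + (1/γ - 1) • (Cᵀ *ᵥ μ)) + (1 - γ)/γ^2 * ((η *ᵥ z) ⬝ᵥ (Sig⁻¹ *ᵥ μ)) := by
  rw [hg', Matrix.sub_mul, Matrix.mul_assoc H, Matrix.sub_mulVec, Matrix.smul_mul,
    Matrix.smul_mulVec]
  simp only [dotProduct_add, dotProduct_sub, dotProduct_smul, dotProduct_mul_mulVec _ _ z,
    dotProduct_mulVec_eq_transpose_mulVec _ z, transpose_transpose, hH.eq, smul_eq_mul]

theorem quadForm_of_riccati (hH : H.IsSymm)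
    (hH' : H' + H * (Cᵀ * Sig * C) * H - (1/γ) • (ηᵀ * C * H + H * (Cᵀ * η))
      - ((γ - 1)/γ^2) • (ηᵀ * Sig⁻¹ * η) = 0) :
    z ⬝ᵥ (H' *ᵥ z) = -((H *ᵥ z) ⬝ᵥ ((Cᵀ * Sig * C) *ᵥ (H *ᵥ z)))
      + 2/γ * ((η *ᵥ z) ⬝ᵥ (C *ᵥ (H *ᵥ z))) + (γ - 1)/γ^2 * ((η *ᵥ z) ⬝ᵥ (Sig⁻¹ *ᵥ (η *ᵥ z))) := by
  have := congrArg (fun M => z ⬝ᵥ (M *ᵥ z)) hH'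
  simp only [Matrix.add_mulVec, Matrix.sub_mulVec, Matrix.smul_mulVec, dotProduct_add,
    dotProduct_sub, dotProduct_smul, Matrix.zero_mulVec, dotProduct_zero, smul_eq_mul] at this
  rw [Matrix.mul_assoc H, dotProduct_mul_mulVec H, Matrix.mul_assoc ηᵀ C, dotProduct_mul_mulVec ηᵀ,
    dotProduct_mul_mulVec H, Matrix.mul_assoc ηᵀ, dotProduct_mul_mulVec ηᵀ] at this
  simp only [← mulVec_mulVec, transpose_transpose, hH.eq] at this ⊢
  rw [dotProduct_mulVec_eq_transpose_mulVec Cᵀ (H *ᵥ z) (η *ᵥ z), transpose_transpose,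
    dotProduct_comm (C *ᵥ _)] at this
  linear_combination this

theorem reducedHJB_eq_zero (hSig : Sig.IsSymm) (hH : H.IsSymm) (hγ : γ ≠ 0)
    (hg' : g' = (((1/γ) • ηᵀ - H * (Cᵀ * Sig)) * C) *ᵥ g - H *ᵥ (m + (1/γ - 1) • (Cᵀ *ᵥ μ))
      + ((1 - γ)/γ^2) • ((ηᵀ * Sig⁻¹) *ᵥ μ))
    (hH' : H' + H * (Cᵀ * Sig * C) * H - (1/γ) • (ηᵀ * C * H + H * (Cᵀ * η))
      - ((γ - 1)/γ^2) • (ηᵀ * Sig⁻¹ * η) = 0) :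
    reducedHJB Sig C η m μ γ r z
      (quadExponent ((1 - γ)/γ * (r + (μ ⬝ᵥ (Sig⁻¹ *ᵥ μ))/(2*γ))
        + ((1/2) * (g ⬝ᵥ ((Cᵀ * Sig * C) *ᵥ g)) - (1/2) * trace (Cᵀ * Sig * C * H)
          + (m + (1/γ - 1) • (Cᵀ *ᵥ μ)) ⬝ᵥ g)) g' H' z) (g - H *ᵥ z) H = 0 := by
  unfold reducedHJB quadExponent
  rw [dotProduct_of_linear_ode hH hg', quadForm_of_riccati hH hH']
  simp only [dotProduct_add, dotProduct_sub, dotProduct_smul, add_dotProduct, sub_dotProduct,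
    smul_dotProduct, mulVec_add, mulVec_sub, smul_eq_mul]
  rw [← mulVec_mulVec z Cᵀ η, dotProduct_comm (H *ᵥ z) (Cᵀ *ᵥ μ), dotProduct_comm (H *ᵥ z) m,
    (hSig.transpose_mul_mul C).dotProduct_mulVec_comm g (H *ᵥ z),
    hSig.inv.dotProduct_mulVec_comm μ (η *ᵥ z)]
  simp only [← dotProduct_mulVec_eq_transpose_mulVec]
  field_simp
  ring

end ReducedHJB

theorem hjb_verification_futures_and_spot_general
    (N : ℕ)
    -- the covariance matrix and its blocks
    (Sig : Matrix (Fin N ⊕ Fin N) (Fin N ⊕ Fin N) ℝ)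
    (hSig : Sig.PosDef)
    -- the time horizon, maturities, and basis parameters
    (T : ℝ) (hT : 0 < T)
    (γ r : ℝ) (hγ : 1 < γ)
    (m : Fin N → ℝ) (μ : Fin N ⊕ Fin N → ℝ)
    (C : Matrix (Fin N ⊕ Fin N) (Fin N) ℝ)
    (eta : ℝ → Matrix (Fin N ⊕ Fin N) (Fin N) ℝ)
    -- the function `H`: C¹ symmetric solution of the Riccati equation with `H(0) = 0`
    (H H' : ℝ → Matrix (Fin N) (Fin N) ℝ)
    (hHderiv : ∀ τ ∈ Icc 0 T, HasDerivWithinAt H (H' τ) (Icc 0 T) τ)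
    (hHsymm : ∀ τ ∈ Icc 0 T, (H τ).IsSymm)
    (hH0 : H 0 = 0)
    (hHric : ∀ τ ∈ Icc 0 T,
      H' τ + H τ * (Cᵀ * Sig * C) * H τ
        - (1/γ) • ((eta (T - τ))ᵀ * C * H τ + H τ * (Cᵀ * eta (T - τ)))
        - ((γ - 1)/γ^2) • ((eta (T - τ))ᵀ * Sig⁻¹ * eta (T - τ)) = 0)
    -- the function `g`: C¹ solution of the linear ODE with `g(0) = 0`
    (g g' : ℝ → (Fin N → ℝ))
    (hgderiv : ∀ τ ∈ Icc 0 T, HasDerivWithinAt g (g' τ) (Icc 0 T) τ)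
    (hg0 : g 0 = 0)
    (hgode : ∀ τ ∈ Icc 0 T,
      g' τ = (((1/γ) • (eta (T - τ))ᵀ - H τ * (Cᵀ * Sig)) * C) *ᵥ g τ
          - H τ *ᵥ (m + (1/γ - 1) • (Cᵀ *ᵥ μ))
          + ((1 - γ)/γ^2) • (((eta (T - τ))ᵀ * Sig⁻¹) *ᵥ μ))
    -- the function `f`
    (f : ℝ → ℝ)
    (hf : ∀ τ, f τ =
      (1 - γ)/γ * (r + (μ ⬝ᵥ (Sig⁻¹ *ᵥ μ))/(2*γ)) * τ
      + ∫ u in (0:ℝ)..τ,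
          ((1/2) * (g u ⬝ᵥ ((Cᵀ * Sig * C) *ᵥ g u))
            - (1/2) * Matrix.trace (Cᵀ * Sig * C * H u)
            + (m + (1/γ - 1) • (Cᵀ *ᵥ μ)) ⬝ᵥ g u))
    -- the candidate value function
    (v : ℝ → ℝ → (Fin N → ℝ) → ℝ)
    (hv : ∀ t x z, v t x z =
      x ^ (1 - γ) / (1 - γ) *
        Real.exp (γ * (f (T - t) + z ⬝ᵥ g (T - t) - (1/2) * (z ⬝ᵥ (H (T - t) *ᵥ z)))))
    -- its partial derivatives
    (vt vx vxx : ℝ → ℝ → (Fin N → ℝ) → ℝ)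
    (vz vxz : ℝ → ℝ → (Fin N → ℝ) → (Fin N → ℝ))
    (vzz : ℝ → ℝ → (Fin N → ℝ) → Matrix (Fin N) (Fin N) ℝ)
    (hvt : ∀ t ∈ Icc 0 T, ∀ x ∈ Ioi (0:ℝ), ∀ z,
      HasDerivWithinAt (fun s => v s x z) (vt t x z) (Icc 0 T) t)
    (hvx : ∀ t ∈ Icc 0 T, ∀ x ∈ Ioi (0:ℝ), ∀ z,
      HasDerivAt (fun y => v t y z) (vx t x z) x)
    (hvxx : ∀ t ∈ Icc 0 T, ∀ x ∈ Ioi (0:ℝ), ∀ z,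
      HasDerivAt (fun y => vx t y z) (vxx t x z) x)
    (hvz : ∀ t ∈ Icc 0 T, ∀ x ∈ Ioi (0:ℝ), ∀ z, ∀ i,
      HasDerivAt (fun s => v t x (Function.update z i s)) (vz t x z i) (z i))
    (hvzz : ∀ t ∈ Icc 0 T, ∀ x ∈ Ioi (0:ℝ), ∀ z, ∀ i j,
      HasDerivAt (fun s => vz t x (Function.update z j s) i) (vzz t x z i j) (z j))
    (hvxz : ∀ t ∈ Icc 0 T, ∀ x ∈ Ioi (0:ℝ), ∀ z, ∀ i,
      HasDerivAt (fun s => vx t x (Function.update z i s)) (vxz t x z i) (z i)) :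
    -- terminal condition
    (∀ x : ℝ, 0 < x → ∀ z, v T x z = x ^ (1 - γ) / (1 - γ)) ∧
    -- the reduced HJB equation
    (∀ t ∈ Icc 0 T, ∀ x ∈ Ioi (0:ℝ), ∀ z,
      vt t x z
        + (m + ((Cᵀ * eta t) *ᵥ z)) ⬝ᵥ vz t x z
        + (1/2) * Matrix.trace (Cᵀ * Sig * C * vzz t x z)
        + r * x * vx t x z
        - (1/2) * ((μ + (eta t *ᵥ z)) ⬝ᵥ (Sig⁻¹ *ᵥ (μ + (eta t *ᵥ z))))
            * (vx t x z)^2 / vxx t x z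
        - (1/(2 * vxx t x z)) * (vxz t x z ⬝ᵥ ((Cᵀ * Sig * C) *ᵥ vxz t x z))
        - (vx t x z / vxx t x z) * ((μ + (eta t *ᵥ z)) ⬝ᵥ (C *ᵥ vxz t x z))
        = 0) := by
  have hγ0 : γ ≠ 0 := (zero_lt_one.trans hγ).ne'
  refine ⟨fun x _ z => by simp [hv, hf, hg0, hH0], fun t ht x hx z => ?_⟩
  have hτ : T - t ∈ Icc 0 T := ⟨sub_nonneg.2 ht.2, sub_le_self _ ht.1⟩
  have hHτ : (H (T - t)).IsSymm := hHsymm _ hτ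
  have hgc : ContinuousOn g (Icc 0 T) := fun τ hτ => (hgderiv τ hτ).continuousWithinAt
  have hHc : ContinuousOn H (Icc 0 T) := fun τ hτ => (hHderiv τ hτ).continuousWithinAt
  have hvx_eq : ∀ y ∈ Ioi (0:ℝ), ∀ z,
      vx t y z = y ^ (-γ) * Real.exp (γ * quadExponent (f (T - t)) (g (T - t)) (H (T - t)) z) :=
    fun y hy z => eq_of_hasDerivAt_rpow_one_sub_div_mul hγ.ne' (ne_of_gt hy) (hv t · z)
      (hvx t ht y hy z)
  have hvz_eq := fun z =>
    eq_of_hasDerivAt_mul_exp_quadExponent_update hHτ (hv t x) (hvz t ht x hx z)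
  have hvt_eq := eq_of_hasDerivWithinAt_mul_exp_quadExponent_reflect hT ht (hv · x z)
    (hvt t ht x hx z) (hasDerivWithinAt_mul_add_integral hf (by fun_prop) hτ) (hgderiv _ hτ)
    (hHderiv _ hτ)
  have hvxx_eq := eq_of_hasDerivAt_rpow_mul hx (hvx_eq · · z) (hvxx t ht x hx z)
  have hvzz_eq := eq_of_hasDerivAt_smul_exp_quadExponent_update hHτ hvz_eq (hvzz t ht x hx z)
  have hvxz_eq :=
    eq_of_hasDerivAt_mul_exp_quadExponent_update hHτ (hvx_eq x hx) (hvxz t ht x hx z)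
  rw [hjb_eq_mul_reducedHJB Sig C (eta t) m μ hγ0 hγ.ne' hx hvt_eq (hvx_eq x hx z) hvxx_eq
      (hvz_eq z) hvzz_eq hvxz_eq,
    reducedHJB_eq_zero (isHermitian_iff_isSymm.mp hSig.isHermitian) hHτ hγ0
      (by simpa only [sub_sub_cancel] using hgode _ hτ)
      (by simpa only [sub_sub_cancel] using hHric _ hτ), mul_zero]

/-- Verification core for the optimal trading problem in which both futures contracts and
the underlying assets are traded: the exponential-quadratic ansatz built from the
solutions `H`, `g` of the Riccati system and the integral `f` satisfies the terminal
condition and the reduced HJB equation. -/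
theorem hjb_verification_futures_and_spot
    (N : ℕ) (hN : 0 < N)
    -- the covariance matrix and its blocks
    (SF SFS SS : Matrix (Fin N) (Fin N) ℝ)
    (Sig : Matrix (Fin N ⊕ Fin N) (Fin N ⊕ Fin N) ℝ)
    (hSigdef : Sig = Matrix.fromBlocks SF SFS SFSᵀ SS)
    (hSig : Sig.PosDef)
    -- the time horizon, maturities, and basis parameters
    (T : ℝ) (Tv : Fin N → ℝ) (hT : 0 < T) (hTv : ∀ i, T < Tv i)
    (etaFv etaSv : Fin N → ℝ) (hetav : ∀ i, etaFv i < etaSv i)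
    (γ r : ℝ) (hγ : 1 < γ)
    (m : Fin N → ℝ) (μ : Fin N ⊕ Fin N → ℝ)
    (C : Matrix (Fin N ⊕ Fin N) (Fin N) ℝ) (hC : C = Matrix.fromRows 1 (-1))
    (etaF etaS : ℝ → Matrix (Fin N) (Fin N) ℝ)
    (hetaF : ∀ t, etaF t = Matrix.diagonal fun i => etaFv i / (Tv i - t))
    (hetaS : ∀ t, etaS t = Matrix.diagonal fun i => etaSv i / (Tv i - t))
    (eta : ℝ → Matrix (Fin N ⊕ Fin N) (Fin N) ℝ)
    (heta : ∀ t, eta t = Matrix.fromRows (etaF t) (etaS t))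
    -- the function `H`: C¹ symmetric solution of the Riccati equation with `H(0) = 0`
    (H H' : ℝ → Matrix (Fin N) (Fin N) ℝ)
    (hHderiv : ∀ τ ∈ Icc 0 T, HasDerivWithinAt H (H' τ) (Icc 0 T) τ)
    (hH'cont : ContinuousOn H' (Icc 0 T))
    (hHsymm : ∀ τ ∈ Icc 0 T, (H τ).IsSymm)
    (hH0 : H 0 = 0)
    (hHric : ∀ τ ∈ Icc 0 T,
      H' τ + H τ * (Cᵀ * Sig * C) * H τ
        - (1/γ) • ((eta (T - τ))ᵀ * C * H τ + H τ * (Cᵀ * eta (T - τ)))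
        - ((γ - 1)/γ^2) • ((eta (T - τ))ᵀ * Sig⁻¹ * eta (T - τ)) = 0)
    -- the function `g`: C¹ solution of the linear ODE with `g(0) = 0`
    (g g' : ℝ → (Fin N → ℝ))
    (hgderiv : ∀ τ ∈ Icc 0 T, HasDerivWithinAt g (g' τ) (Icc 0 T) τ)
    (hg'cont : ContinuousOn g' (Icc 0 T))
    (hg0 : g 0 = 0)
    (hgode : ∀ τ ∈ Icc 0 T,
      g' τ = (((1/γ) • (eta (T - τ))ᵀ - H τ * (Cᵀ * Sig)) * C) *ᵥ g τ
          - H τ *ᵥ (m + (1/γ - 1) • (Cᵀ *ᵥ μ))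
          + ((1 - γ)/γ^2) • (((eta (T - τ))ᵀ * Sig⁻¹) *ᵥ μ))
    -- the function `f`
    (f : ℝ → ℝ)
    (hf : ∀ τ, f τ =
      (1 - γ)/γ * (r + (μ ⬝ᵥ (Sig⁻¹ *ᵥ μ))/(2*γ)) * τ
      + ∫ u in (0:ℝ)..τ,
          ((1/2) * (g u ⬝ᵥ ((Cᵀ * Sig * C) *ᵥ g u))
            - (1/2) * Matrix.trace (Cᵀ * Sig * C * H u)
            + (m + (1/γ - 1) • (Cᵀ *ᵥ μ)) ⬝ᵥ g u))
    -- the candidate value function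
    (v : ℝ → ℝ → (Fin N → ℝ) → ℝ)
    (hv : ∀ t x z, v t x z =
      x ^ (1 - γ) / (1 - γ) *
        Real.exp (γ * (f (T - t) + z ⬝ᵥ g (T - t) - (1/2) * (z ⬝ᵥ (H (T - t) *ᵥ z)))))
    -- its partial derivatives
    (vt vx vxx : ℝ → ℝ → (Fin N → ℝ) → ℝ)
    (vz vxz : ℝ → ℝ → (Fin N → ℝ) → (Fin N → ℝ))
    (vzz : ℝ → ℝ → (Fin N → ℝ) → Matrix (Fin N) (Fin N) ℝ)
    (hvt : ∀ t ∈ Icc 0 T, ∀ x ∈ Ioi (0:ℝ), ∀ z,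
      HasDerivWithinAt (fun s => v s x z) (vt t x z) (Icc 0 T) t)
    (hvx : ∀ t ∈ Icc 0 T, ∀ x ∈ Ioi (0:ℝ), ∀ z,
      HasDerivAt (fun y => v t y z) (vx t x z) x)
    (hvxx : ∀ t ∈ Icc 0 T, ∀ x ∈ Ioi (0:ℝ), ∀ z,
      HasDerivAt (fun y => vx t y z) (vxx t x z) x)
    (hvz : ∀ t ∈ Icc 0 T, ∀ x ∈ Ioi (0:ℝ), ∀ z, ∀ i,
      HasDerivAt (fun s => v t x (Function.update z i s)) (vz t x z i) (z i))
    (hvzz : ∀ t ∈ Icc 0 T, ∀ x ∈ Ioi (0:ℝ), ∀ z, ∀ i j,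
      HasDerivAt (fun s => vz t x (Function.update z j s) i) (vzz t x z i j) (z j))
    (hvxz : ∀ t ∈ Icc 0 T, ∀ x ∈ Ioi (0:ℝ), ∀ z, ∀ i,
      HasDerivAt (fun s => vx t x (Function.update z i s)) (vxz t x z i) (z i)) :
    -- terminal condition
    (∀ x : ℝ, 0 < x → ∀ z, v T x z = x ^ (1 - γ) / (1 - γ)) ∧
    -- the reduced HJB equation
    (∀ t ∈ Icc 0 T, ∀ x ∈ Ioi (0:ℝ), ∀ z,
      vt t x z
        + (m + ((Cᵀ * eta t) *ᵥ z)) ⬝ᵥ vz t x z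
        + (1/2) * Matrix.trace (Cᵀ * Sig * C * vzz t x z)
        + r * x * vx t x z
        - (1/2) * ((μ + (eta t *ᵥ z)) ⬝ᵥ (Sig⁻¹ *ᵥ (μ + (eta t *ᵥ z))))
            * (vx t x z)^2 / vxx t x z
        - (1/(2 * vxx t x z)) * (vxz t x z ⬝ᵥ ((Cᵀ * Sig * C) *ᵥ vxz t x z))
        - (vx t x z / vxx t x z) * ((μ + (eta t *ᵥ z)) ⬝ᵥ (C *ᵥ vxz t x z))
        = 0) :=
  hjb_verification_futures_and_spot_general N Sig hSig T hT γ r hγ m μ C eta H H' hHderiv hHsymm hH0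
    hHric g g' hgderiv hg0 hgode f hf v hv vt vx vxx vz vxz vzz hvt hvx hvxx hvz hvzz hvxz
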